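/- arXiv:1712.04911 — 2 statements merged into one kernel-verified Lean document; each statement's English description precedes it below -/
import Mathlib

section
/- In the k-regular tree T (k ≥ 3) with a distinguished end ξ, defining h(x,y) as the height difference of vertices x, y relative to ξ, the number of vertices x at distance m+n from a fixed vertex 0 with h(0,x) = m−n equals (k−1)^n if m = 0, equals 1 if m ≥ 1 and n = 0, and equals (k−1)^{n−1}(k−2) if m ≥ 1 and n ≥ 1; in all cases this count is at most (k−1)^n. -/
/-!
Let `p v` be the parent of `v`. Every edge joins a vertex to its parent, so a walk of length `L`
from `o` to `x` yields `a + b ≤ L` with `p^[a] o = p^[b] x`, and conversely such a meeting point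
gives a walk of length `a + b`. Comparing levels, `x` lies at distance `m + n` from `o` with height
difference `m - n` iff `p^[m] o = p^[n] x` and the ancestors one step earlier differ. Since every
vertex has `k - 1` children, the count is that of the `n`-th (or `(n-1)`-st) generation of
descendants of `o`, of `p^[m] o` alone, or of the `k - 2` children of `p^[m] o` other than
`p^[m-1] o`.
-/

open Function Set SimpleGraph

theorem ncard_preimage_eq_mul {α β : Type*} {f : α → β} {d : ℕ}
    (hfin : ∀ b, (f ⁻¹' {b}).Finite) (hcard : ∀ b, (f ⁻¹' {b}).ncard = d)
    {A : Set β} (hA : A.Finite) : (f ⁻¹' A).ncard = A.ncard * d := by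
  lift A to Finset β using hA
  rw [← Nat.card_coe_set_eq, Finset.card_preimage_eq_sum_card_image_eq fun b _ => hfin b,
    ncard_coe_finset]
  exact Finset.sum_const_nat fun b _ => (Nat.card_coe_set_eq (f ⁻¹' {b})).trans (hcard b)

theorem Set.Finite.preimage_iterate {α : Type*} {f : α → α} (hfin : ∀ a, (f ⁻¹' {a}).Finite)
    {A : Set α} (hA : A.Finite) (j : ℕ) : (f^[j] ⁻¹' A).Finite := by
  induction j with
  | zero => exact hA
  | succ j ih => rw [iterate_succ, preimage_comp]; exact ih.preimage' fun a _ => hfin a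

theorem ncard_preimage_iterate_eq_mul_pow {α : Type*} {f : α → α} {d : ℕ}
    (hfin : ∀ a, (f ⁻¹' {a}).Finite) (hcard : ∀ a, (f ⁻¹' {a}).ncard = d)
    {A : Set α} (hA : A.Finite) (j : ℕ) : (f^[j] ⁻¹' A).ncard = A.ncard * d ^ j := by
  induction j with
  | zero => simp
  | succ j ih =>
    rw [iterate_succ, preimage_comp, ncard_preimage_eq_mul hfin hcard (hA.preimage_iterate hfin j),
      ih, pow_succ, mul_assoc]

theorem Function.iterate_eq_iterate_of_le {α : Type*} {f : α → α} {u w : α} {a b a' b' : ℕ}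
    (h : f^[a] u = f^[b] w) (ha : a ≤ a') (hab : a' + b = a + b') : f^[a'] u = f^[b'] w := by
  obtain ⟨t, rfl⟩ := Nat.exists_eq_add_of_le ha
  obtain rfl : b' = b + t := by omega
  rw [add_comm a, add_comm b, iterate_add_apply, iterate_add_apply, h]

structure IsParentMap {V : Type*} (G : SimpleGraph V) (ℓ : V → ℤ) (p : V → V) : Prop where
  adj : ∀ v, G.Adj v (p v)
  level : ∀ v, ℓ (p v) = ℓ v + 1
  eq_or_eq_of_adj : ∀ {x y}, G.Adj x y → p x = y ∨ p y = x

theorem exists_isParentMap {V : Type*} {G : SimpleGraph V} {ℓ : V → ℤ}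
    (hparent : ∀ v, ∃! w, G.Adj v w ∧ ℓ w = ℓ v + 1)
    (hlevel : ∀ v w, G.Adj v w → ℓ w = ℓ v + 1 ∨ ℓ w = ℓ v - 1) :
    ∃ p, IsParentMap G ℓ p := by
  choose p hp using hparent
  refine ⟨p, fun v => (hp v).1.1, fun v => (hp v).1.2, fun {x y} hxy => ?_⟩
  rcases hlevel x y hxy with h | h
  · exact Or.inl ((hp x).2 y ⟨hxy, h⟩).symm
  · exact Or.inr ((hp y).2 x ⟨hxy.symm, by omega⟩).symm

def levelSphere {V : Type*} (G : SimpleGraph V) (ℓ : V → ℤ) (o : V) (m n : ℕ) : Set V :=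
  {x | G.dist o x = m + n ∧ ℓ x = ℓ o + ((m : ℤ) - (n : ℤ))}

namespace IsParentMap

variable {V : Type*} {G : SimpleGraph V} {ℓ : V → ℤ} {p : V → V} (hp : IsParentMap G ℓ p)
include hp

theorem preimage_singleton (v : V) : p ⁻¹' {v} = G.neighborSet v \ {p v} := by
  ext x
  simp only [mem_preimage, mem_singleton_iff, mem_sdiff, mem_neighborSet]
  constructor
  · rintro rfl
    refine ⟨(hp.adj x).symm, fun hx => ?_⟩
    have := hp.level (p x)
    rw [← hx, hp.level x] at this
    omega
  · rintro ⟨hadj, hne⟩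
    exact (hp.eq_or_eq_of_adj hadj).resolve_left (Ne.symm hne)

theorem finite_preimage_singleton (hfin : ∀ v, (G.neighborSet v).Finite) (v : V) :
    (p ⁻¹' {v}).Finite := by
  rw [hp.preimage_singleton]; exact (hfin v).sdiff

theorem ncard_preimage_singleton {k : ℕ} (hreg : ∀ v, (G.neighborSet v).ncard = k) (v : V) :
    (p ⁻¹' {v}).ncard = k - 1 := by
  rw [hp.preimage_singleton, ncard_sdiff_singleton_of_mem (s := G.neighborSet v) (hp.adj v), hreg]

theorem level_iterate (a : ℕ) (v : V) : ℓ (p^[a] v) = ℓ v + a := by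
  induction a with
  | zero => simp
  | succ a ih => rw [iterate_succ_apply', hp.level, ih]; push_cast; ring

theorem level_add_eq_of_iterate_eq {u w : V} {a b : ℕ} (h : p^[a] u = p^[b] w) :
    ℓ u + a = ℓ w + b := by
  rw [← hp.level_iterate, ← hp.level_iterate, h]

theorem exists_walk_length_eq (a : ℕ) (v : V) : ∃ W : G.Walk v (p^[a] v), W.length = a := by
  induction a generalizing v with
  | zero => exact ⟨.nil, rfl⟩
  | succ a ih =>
    obtain ⟨W, hW⟩ := ih (p v)
    exact ⟨(W.cons (hp.adj v)).copy rfl (iterate_succ_apply p a v).symm, by simp [hW]⟩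

theorem dist_le_of_iterate_eq {u w : V} {a b : ℕ} (h : p^[a] u = p^[b] w) :
    G.dist u w ≤ a + b := by
  obtain ⟨W₁, h₁⟩ := hp.exists_walk_length_eq a u
  obtain ⟨W₂, h₂⟩ := hp.exists_walk_length_eq b w
  simpa [h₁, h₂] using dist_le (W₁.append ((W₂.copy rfl h.symm).reverse))

theorem exists_iterate_eq_of_walk {u w : V} (W : G.Walk u w) :
    ∃ a b, a + b ≤ W.length ∧ p^[a] u = p^[b] w := by
  induction W with
  | nil => exact ⟨0, 0, le_rfl, rfl⟩
  | @cons u y w huy W ih =>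
    obtain ⟨a, b, hab, h⟩ := ih
    rcases hp.eq_or_eq_of_adj huy with hu | hy
    · exact ⟨a + 1, b, by simp; omega, by rw [iterate_succ_apply, hu, h]⟩
    · refine ⟨a, b + 1, by simp; omega, ?_⟩
      rw [← hy, ← iterate_succ_apply, iterate_succ_apply', h, iterate_succ_apply']

theorem mem_levelSphere_iff (hconn : G.Connected) {o x : V} {m n : ℕ} :
    x ∈ levelSphere G ℓ o m n ↔
      p^[m] o = p^[n] x ∧ (m = 0 ∨ n = 0 ∨ p^[m - 1] o ≠ p^[n - 1] x) := by
  obtain ⟨W, hW⟩ := hconn.exists_walk_length_eq_dist o x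
  obtain ⟨a, b, hab, hmeet⟩ := hp.exists_iterate_eq_of_walk W
  have hlev := hp.level_add_eq_of_iterate_eq hmeet
  constructor
  · rintro ⟨hdist, hℓ⟩
    refine ⟨iterate_eq_iterate_of_le hmeet (by omega) (by omega), ?_⟩
    by_contra! h
    have := hp.dist_le_of_iterate_eq h.2.2
    omega
  · rintro ⟨hm, hmin⟩
    have hlev' := hp.level_add_eq_of_iterate_eq hm
    refine ⟨le_antisymm (hp.dist_le_of_iterate_eq hm) ?_, by omega⟩
    by_contra! hlt
    have : p^[m - 1] o = p^[n - 1] x := iterate_eq_iterate_of_le hmeet (by omega) (by omega)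
    rcases hmin with h | h | h
    · omega
    · omega
    · exact h this

theorem levelSphere_zero_left (hconn : G.Connected) (o : V) (n : ℕ) :
    levelSphere G ℓ o 0 n = p^[n] ⁻¹' {o} := by
  ext x
  simp [hp.mem_levelSphere_iff hconn, eq_comm]

theorem levelSphere_zero_right (hconn : G.Connected) (o : V) (m : ℕ) :
    levelSphere G ℓ o m 0 = {p^[m] o} := by
  ext x
  simp [hp.mem_levelSphere_iff hconn, eq_comm]

theorem levelSphere_succ_succ (hconn : G.Connected) (o : V) (m n : ℕ) :
    levelSphere G ℓ o (m + 1) (n + 1) = p^[n] ⁻¹' (p ⁻¹' {p^[m + 1] o} \ {p^[m] o}) := by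
  ext x
  simp [hp.mem_levelSphere_iff hconn, ← iterate_succ_apply' p n, eq_comm]

theorem ncard_levelSphere_zero_left (hconn : G.Connected) (hfin : ∀ v, (G.neighborSet v).Finite)
    {k : ℕ} (hreg : ∀ v, (G.neighborSet v).ncard = k) (o : V) (n : ℕ) :
    (levelSphere G ℓ o 0 n).ncard = (k - 1) ^ n := by
  rw [hp.levelSphere_zero_left hconn, ncard_preimage_iterate_eq_mul_pow
    (hp.finite_preimage_singleton hfin) (hp.ncard_preimage_singleton hreg) (finite_singleton o),
    ncard_singleton, one_mul]

theorem ncard_levelSphere_zero_right (hconn : G.Connected) (o : V) (m : ℕ) :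
    (levelSphere G ℓ o m 0).ncard = 1 := by
  rw [hp.levelSphere_zero_right hconn, ncard_singleton]

theorem ncard_levelSphere_succ_succ (hconn : G.Connected) (hfin : ∀ v, (G.neighborSet v).Finite)
    {k : ℕ} (hreg : ∀ v, (G.neighborSet v).ncard = k) (o : V) (m n : ℕ) :
    (levelSphere G ℓ o (m + 1) (n + 1)).ncard = (k - 1) ^ n * (k - 2) := by
  have hmem : p^[m] o ∈ p ⁻¹' {p^[m + 1] o} := (iterate_succ_apply' p m o).symm
  rw [hp.levelSphere_succ_succ hconn, ncard_preimage_iterate_eq_mul_pow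
    (hp.finite_preimage_singleton hfin) (hp.ncard_preimage_singleton hreg)
    ((hp.finite_preimage_singleton hfin _).sdiff), ncard_sdiff_singleton_of_mem hmem,
    hp.ncard_preimage_singleton hreg, mul_comm, Nat.sub_sub]

theorem ncard_levelSphere_le (hconn : G.Connected) (hfin : ∀ v, (G.neighborSet v).Finite)
    {k : ℕ} (hreg : ∀ v, (G.neighborSet v).ncard = k) (o : V) (m n : ℕ) :
    (levelSphere G ℓ o m n).ncard ≤ (k - 1) ^ n := by
  rcases m with _ | m
  · exact (hp.ncard_levelSphere_zero_left hconn hfin hreg o n).le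
  rcases n with _ | n
  · rw [hp.ncard_levelSphere_zero_right hconn, pow_zero]
  rw [hp.ncard_levelSphere_succ_succ hconn hfin hreg, pow_succ]
  exact Nat.mul_le_mul_left _ (by omega)

end IsParentMap

theorem regular_tree_level_sphere_count_general {V : Type*} (G : SimpleGraph V) (k : ℕ)
    (hconn : G.Connected)
    (hfin : ∀ v, (G.neighborSet v).Finite)
    (hreg : ∀ v, (G.neighborSet v).ncard = k)
    (ℓ : V → ℤ)
    (hparent : ∀ v, ∃! w, G.Adj v w ∧ ℓ w = ℓ v + 1)
    (hlevel : ∀ v w, G.Adj v w → ℓ w = ℓ v + 1 ∨ ℓ w = ℓ v - 1)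
    (o : V) (m n : ℕ) :
    (m = 0 →
      {x : V | G.dist o x = m + n ∧ ℓ x = ℓ o + ((m : ℤ) - (n : ℤ))}.ncard
        = (k - 1) ^ n) ∧
    (1 ≤ m → n = 0 →
      {x : V | G.dist o x = m + n ∧ ℓ x = ℓ o + ((m : ℤ) - (n : ℤ))}.ncard = 1) ∧
    (1 ≤ m → 1 ≤ n →
      {x : V | G.dist o x = m + n ∧ ℓ x = ℓ o + ((m : ℤ) - (n : ℤ))}.ncard
        = (k - 1) ^ (n - 1) * (k - 2)) ∧
    {x : V | G.dist o x = m + n ∧ ℓ x = ℓ o + ((m : ℤ) - (n : ℤ))}.ncard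
      ≤ (k - 1) ^ n := by
  obtain ⟨p, hp⟩ := exists_isParentMap hparent hlevel
  refine ⟨?_, ?_, ?_, hp.ncard_levelSphere_le hconn hfin hreg o m n⟩
  · rintro rfl
    exact hp.ncard_levelSphere_zero_left hconn hfin hreg o n
  · rintro - rfl
    exact hp.ncard_levelSphere_zero_right hconn o m
  · intro hm hn
    obtain ⟨m, rfl⟩ := Nat.exists_eq_add_of_le' hm
    obtain ⟨n, rfl⟩ := Nat.exists_eq_add_of_le' hn
    exact hp.ncard_levelSphere_succ_succ hconn hfin hreg o m n

/-- In the `k`-regular tree (`k ≥ 3`) with a distinguished end, encoded by a level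
function `ℓ : V → ℤ` such that every vertex has exactly one neighbour (its parent) one
level up and all other neighbours one level down, the number of vertices `x` at distance
`m + n` from a fixed vertex `o` with height difference `ℓ x - ℓ o = m - n` equals
`(k-1)^n` if `m = 0`, equals `1` if `m ≥ 1` and `n = 0`, and equals `(k-1)^(n-1)*(k-2)`
if `m, n ≥ 1`; in all cases it is at most `(k-1)^n`. -/
theorem regular_tree_level_sphere_count {V : Type*} (G : SimpleGraph V) (k : ℕ)
    (hk : 3 ≤ k) (hconn : G.Connected) (hacyclic : G.IsAcyclic)
    (hfin : ∀ v, (G.neighborSet v).Finite)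
    (hreg : ∀ v, (G.neighborSet v).ncard = k)
    (ℓ : V → ℤ)
    (hparent : ∀ v, ∃! w, G.Adj v w ∧ ℓ w = ℓ v + 1)
    (hlevel : ∀ v w, G.Adj v w → ℓ w = ℓ v + 1 ∨ ℓ w = ℓ v - 1)
    (o : V) (m n : ℕ) :
    (m = 0 →
      {x : V | G.dist o x = m + n ∧ ℓ x = ℓ o + ((m : ℤ) - (n : ℤ))}.ncard
        = (k - 1) ^ n) ∧
    (1 ≤ m → n = 0 →
      {x : V | G.dist o x = m + n ∧ ℓ x = ℓ o + ((m : ℤ) - (n : ℤ))}.ncard = 1) ∧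
    (1 ≤ m → 1 ≤ n →
      {x : V | G.dist o x = m + n ∧ ℓ x = ℓ o + ((m : ℤ) - (n : ℤ))}.ncard
        = (k - 1) ^ (n - 1) * (k - 2)) ∧
    {x : V | G.dist o x = m + n ∧ ℓ x = ℓ o + ((m : ℤ) - (n : ℤ))}.ncard
      ≤ (k - 1) ^ n :=
  regular_tree_level_sphere_count_general G k hconn hfin hreg ℓ hparent hlevel o m n
end

section
/- Let V be a countable set, Δ : V × V → (0,∞) a function satisfying the cocycle property Δ(x,z) = Δ(x,y)Δ(y,z) for all x, y, z ∈ V, and τ : V × V → [0,∞) a symmetric function. If χ := sup_{x} Σ_{y} τ(x,y) Δ(x,y)^{1/2} < ∞, then for any fixed vertex 0, the triangle sum Σ_{x,y} τ(0,x) τ(x,y) τ(y,0) is at most χ^3. -/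
open scoped ENNReal

/-- Abstract triangle bound: if `Δ` is a positive finite cocycle and `τ` a symmetric
nonnegative two-point function whose tilted susceptibility
`χ = sup_x Σ_y τ(x,y) Δ(x,y)^{1/2}` is finite, then the triangle sum
`Σ_{x,y} τ(0,x) τ(x,y) τ(y,0)` is at most `χ³`. -/
theorem triangle_le_tilted_susceptibility_cubed {V : Type*} [Countable V]
    (τ Δ : V → V → ℝ≥0∞)
    (hΔpos : ∀ x y, 0 < Δ x y) (hΔfin : ∀ x y, Δ x y ≠ ⊤)
    (hcocycle : ∀ x y z, Δ x z = Δ x y * Δ y z)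
    (hτfin : ∀ x y, τ x y ≠ ⊤) (hτsymm : ∀ x y, τ x y = τ y x)
    (o : V)
    (hχ : (⨆ x, ∑' y, τ x y * Δ x y ^ (1 / 2 : ℝ)) < ⊤) :
    (∑' x, ∑' y, τ o x * τ x y * τ y o)
      ≤ (⨆ x, ∑' y, τ x y * Δ x y ^ (1 / 2 : ℝ)) ^ 3 := by
  set S : V → ℝ≥0∞ := fun x => ∑' y, τ x y * Δ x y ^ (1 / 2 : ℝ) with hS
  set χ : ℝ≥0∞ := ⨆ x, S x with hχdef
  have hΔoo : Δ o o = 1 := by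
    have h := hcocycle o o o
    nth_rewrite 1 [← mul_one (Δ o o)] at h
    exact ((ENNReal.mul_right_inj (hΔpos o o).ne' (hΔfin o o)).mp h).symm
  have hτo : ∀ y, τ y o ≤ ∑' z, τ y z * Δ o z ^ (1 / 2 : ℝ) := by
    intro y
    have : τ y o = τ y o * Δ o o ^ (1 / 2 : ℝ) := by
      rw [hΔoo, ENNReal.one_rpow, mul_one]
    rw [this]
    exact ENNReal.le_tsum o
  have key : ∀ x y, τ o x * τ x y * τ y o
      ≤ (τ o x * Δ o x ^ (1 / 2 : ℝ)) * ((τ x y * Δ x y ^ (1 / 2 : ℝ)) * χ) := by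
    intro x y
    have h2 : ∑' z, τ y z * Δ o z ^ (1 / 2 : ℝ)
        = (Δ o x ^ (1 / 2 : ℝ) * Δ x y ^ (1 / 2 : ℝ)) * S y := by
      rw [hS]
      rw [← ENNReal.tsum_mul_left]
      refine tsum_congr fun z => ?_
      rw [show Δ o z = Δ o x * Δ x y * Δ y z from by rw [← hcocycle, ← hcocycle]]
      rw [ENNReal.mul_rpow_of_nonneg _ _ (by norm_num : (0:ℝ) ≤ 1/2),
          ENNReal.mul_rpow_of_nonneg _ _ (by norm_num : (0:ℝ) ≤ 1/2)]
      ring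
    calc τ o x * τ x y * τ y o
        ≤ τ o x * τ x y * ((Δ o x ^ (1 / 2 : ℝ) * Δ x y ^ (1 / 2 : ℝ)) * S y) := by
          rw [← h2]; exact mul_le_mul_right (hτo y) _
      _ = (τ o x * Δ o x ^ (1 / 2 : ℝ)) * ((τ x y * Δ x y ^ (1 / 2 : ℝ)) * S y) := by
          ring
      _ ≤ (τ o x * Δ o x ^ (1 / 2 : ℝ)) * ((τ x y * Δ x y ^ (1 / 2 : ℝ)) * χ) := by
          gcongr
          exact le_iSup S y
  calc ∑' x, ∑' y, τ o x * τ x y * τ y o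
      ≤ ∑' x, ∑' y, (τ o x * Δ o x ^ (1 / 2 : ℝ)) * ((τ x y * Δ x y ^ (1 / 2 : ℝ)) * χ) :=
        ENNReal.tsum_le_tsum fun x => ENNReal.tsum_le_tsum fun y => key x y
    _ = ∑' x, (τ o x * Δ o x ^ (1 / 2 : ℝ)) * (S x * χ) := by
        refine tsum_congr fun x => ?_
        rw [ENNReal.tsum_mul_left, ENNReal.tsum_mul_right]
    _ ≤ ∑' x, (τ o x * Δ o x ^ (1 / 2 : ℝ)) * (χ * χ) :=
        ENNReal.tsum_le_tsum fun x => by gcongr; exact le_iSup S x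
    _ = S o * (χ * χ) := by rw [ENNReal.tsum_mul_right]
    _ ≤ χ * (χ * χ) := by gcongr; exact le_iSup S o
    _ = χ ^ 3 := by ring
end
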